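/- Round-trip of the MB/4D' type translation, direction 1: for any λ_{S₀} (MB) type τ₁, translating it to a 4D' type and back yields τ₁ (i.e., ⌈⌊τ₁⌋⌉ ≡ τ₁), and for any MB annotation [τ₂ σ₂] τ₃ σ₃, translating the annotation to a 4D' meta-continuation type with answer type and back yields the original pair of pairs ((τ₂, σ₂), (τ₃, σ₃)). -/
import Mathlib


namespace MBRT1

/- MB types and annotations for λ_{S₀} (extended monomorphic
   Materzok–Biernacki system: arrow types carry a non-empty annotation
   [t1 s1] t2 s2 for the function body). -/
mutual
inductive MTy : Type
  | nat : MTy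
  | arr : MTy → MTy → MTy → MAnn → MTy → MAnn → MTy
inductive MAnn : Type
  | eps : MAnn
  | ann : MTy → MAnn → MTy → MAnn → MAnn
end

/- 4D' types: the trail-free 4D type system for shift0/reset0, with
   defunctionalized (pair-list) meta-continuation types
   σ ::= •σ | (τ1 ⟨σ1⟩ τ2) :: σ. -/
mutual
inductive PTy : Type
  | nat : PTy
  | arr : PTy → PTy → PM → PTy → PM → PTy → PTy
inductive PM : Type
  | empty : PM
  | cons : PTy → PM → PTy → PM → PM
end

/- The translation ⌊·⌋ from MB types and annotations to 4D' types and
   (meta-continuation type, answer type) pairs. -/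
mutual
def toP : MTy → PTy
  | .nat => .nat
  | .arr a b t1 s1 t2 s2 =>
      .arr (toP a) (toP b) (toPM t1 s1) (toPA t1 s1) (toPM t2 s2) (toPA t2 s2)
  termination_by τ => sizeOf τ
  decreasing_by all_goals (simp_wf <;> omega)
def toPM : MTy → MAnn → PM
  | _, .eps => .empty
  | τ, .ann ta sa tb sb => .cons (toP τ) (toPM ta sa) (toPA ta sa) (toPM tb sb)
  termination_by τ σ => sizeOf τ + sizeOf σ
  decreasing_by all_goals (simp_wf <;> omega)
def toPA : MTy → MAnn → PTy
  | τ, .eps => toP τ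
  | _, .ann _ _ tb sb => toPA tb sb
  termination_by τ σ => sizeOf τ + sizeOf σ
  decreasing_by all_goals (simp_wf <;> omega)
end

/- The inverse translation ⌈·⌉ from 4D' types and (meta-continuation type,
   answer type) pairs back to MB types and annotations. -/
mutual
def fromP : PTy → MTy
  | .nat => .nat
  | .arr a b m1 a1 m2 a2 =>
      .arr (fromP a) (fromP b) (fromPT m1 a1) (fromPA m1 a1) (fromPT m2 a2) (fromPA m2 a2)
  termination_by τ => sizeOf τ
  decreasing_by all_goals (simp_wf <;> omega)
def fromPT : PM → PTy → MTy
  | .empty, α => fromP α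
  | .cons t1 _ _ _, _ => fromP t1
  termination_by σ α => sizeOf σ + sizeOf α
  decreasing_by all_goals (simp_wf <;> omega)
def fromPA : PM → PTy → MAnn
  | .empty, _ => .eps
  | .cons _ σ1 t2 rest, α => .ann (fromPT σ1 t2) (fromPA σ1 t2) (fromPT rest α) (fromPA rest α)
  termination_by σ α => sizeOf σ + sizeOf α
  decreasing_by all_goals (simp_wf <;> omega)
end

mutual
theorem rt1 : ∀ τ : MTy, fromP (toP τ) = τ
  | .nat => by simp [toP, fromP]
  | .arr a b t1 s1 t2 s2 => by
      rw [toP, fromP, rt1 a, rt1 b, rt2 t1 s1, rt3 t1 s1, rt2 t2 s2, rt3 t2 s2]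
  termination_by τ => sizeOf τ
  decreasing_by all_goals (simp_wf <;> omega)
theorem rt2 : ∀ (τ : MTy) (σ : MAnn), fromPT (toPM τ σ) (toPA τ σ) = τ
  | τ, .eps => by rw [toPM, toPA, fromPT, rt1 τ]
  | τ, .ann ta sa tb sb => by rw [toPM, fromPT, rt1 τ]
  termination_by τ σ => sizeOf τ + sizeOf σ
  decreasing_by all_goals (simp_wf <;> omega)
theorem rt3 : ∀ (τ : MTy) (σ : MAnn), fromPA (toPM τ σ) (toPA τ σ) = σ
  | τ, .eps => by rw [toPM, fromPA]
  | τ, .ann ta sa tb sb => by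
      rw [toPM, toPA, fromPA, rt2 ta sa, rt3 ta sa, rt2 tb sb, rt3 tb sb]
  termination_by τ σ => sizeOf τ + sizeOf σ
  decreasing_by all_goals (simp_wf <;> omega)
end

/-- Round-trip of the MB/4D' type translation, direction 1. -/
theorem mb_roundtrip_one :
    (∀ τ1 : MTy, fromP (toP τ1) = τ1) ∧
    (∀ (τ2 : MTy) (σ2 : MAnn) (τ3 : MTy) (σ3 : MAnn),
      ((fromPT (toPM τ2 σ2) (toPA τ2 σ2), fromPA (toPM τ2 σ2) (toPA τ2 σ2)),
        (fromPT (toPM τ3 σ3) (toPA τ3 σ3), fromPA (toPM τ3 σ3) (toPA τ3 σ3))) =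
      ((τ2, σ2), (τ3, σ3))) := by
  exact ⟨rt1, fun τ2 σ2 τ3 σ3 => by rw [rt2, rt3, rt2, rt3]⟩

end MBRT1
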